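/- arXiv:2308.08508 — 3 statements merged into one kernel-verified Lean document; each statement's English description precedes it below -/
import Mathlib

section
/- Let L be a complete OML. If every block of L is atomic, then every maximal chain in L is weakly atomic in its induced order. -/
/-- A complete orthomodular lattice. -/
class CompleteOML (α : Type*) extends CompleteLattice α, Compl α where
  compl_compl : ∀ x : α, xᶜᶜ = x
  compl_antitone : ∀ x y : α, x ≤ y → yᶜ ≤ xᶜ
  inf_compl : ∀ x : α, x ⊓ xᶜ = ⊥
  sup_compl : ∀ x : α, x ⊔ xᶜ = ⊤
  orthomodular : ∀ x y : α, x ≤ y → x ⊔ (xᶜ ⊓ y) = y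

/-- `x` and `y` commute: `x = (x ⊓ y) ⊔ (x ⊓ yᶜ)`. -/
def Commutes {α : Type*} [Lattice α] [Compl α] (x y : α) : Prop :=
  x = (x ⊓ y) ⊔ (x ⊓ yᶜ)

/-- A subset containing the bounds, closed under `⊓`, `⊔` and `ᶜ`, whose elements
pairwise commute. -/
def IsCommSubalg {α : Type*} [Lattice α] [BoundedOrder α] [Compl α] (S : Set α) : Prop :=
  ⊥ ∈ S ∧ ⊤ ∈ S ∧ (∀ x ∈ S, ∀ y ∈ S, x ⊓ y ∈ S) ∧ (∀ x ∈ S, ∀ y ∈ S, x ⊔ y ∈ S) ∧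
    (∀ x ∈ S, xᶜ ∈ S) ∧ ∀ x ∈ S, ∀ y ∈ S, Commutes x y

/-- A block: a maximal commuting subalgebra. -/
def IsBlock {α : Type*} [Lattice α] [BoundedOrder α] [Compl α] (S : Set α) : Prop :=
  IsCommSubalg S ∧ ∀ T : Set α, IsCommSubalg T → S ⊆ T → S = T

/-- A subset `S` (as a poset with least element `⊥`) is atomic. -/
def AtomicSubset {α : Type*} [CompleteLattice α] (S : Set α) : Prop :=
  ∀ x ∈ S, x ≠ ⊥ → ∃ a ∈ S, a ≠ ⊥ ∧ (∀ s ∈ S, ¬ (⊥ < s ∧ s < a)) ∧ a ≤ x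

/-!
Elements of a maximal chain `C` are comparable, hence pairwise commute, so `C` lies in a block `B`.
For `x < y` in `C`, orthomodularity makes `xᶜ ⊓ y` nonzero, so it lies above an atom `a` of `B`.
Being an atom of a Boolean algebra containing `C`, `a` splits `C` into the part below `aᶜ` and the
part above `a`. By completeness the supremum of the lower part and the infimum of the upper part
are again in `C`, and they form a covering pair of `C` between `x` and `y`.
-/

namespace IsMaxChain

variable {α : Type*}

theorem mem_of_forall_rel {r : α → α → Prop} {C : Set α} (hC : IsMaxChain r C) {z : α}
    (hz : ∀ c ∈ C, z ≠ c → r z c ∨ r c z) : z ∈ C :=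
  (hC.2 (hC.1.insert hz) (Set.subset_insert _ _)).symm ▸ Set.mem_insert _ _

variable [CompleteLattice α] {C : Set α}

theorem sSup_mem (hC : IsMaxChain (· ≤ ·) C) {D : Set α} (hD : D ⊆ C) : sSup D ∈ C := by
  refine hC.mem_of_forall_rel fun c hc _ => ?_
  by_cases h : ∀ d ∈ D, d ≤ c
  · exact Or.inl (sSup_le h)
  · push Not at h
    obtain ⟨d, hd, hdc⟩ := h
    exact Or.inr ((hC.1.lt_of_not_ge (hD hd) hc hdc).le.trans (le_sSup hd))

theorem sInf_mem (hC : IsMaxChain (· ≤ ·) C) {D : Set α} (hD : D ⊆ C) : sInf D ∈ C := by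
  refine hC.mem_of_forall_rel fun c hc _ => ?_
  by_cases h : ∀ d ∈ D, c ≤ d
  · exact Or.inr (le_sInf h)
  · push Not at h
    obtain ⟨d, hd, hcd⟩ := h
    exact Or.inl ((sInf_le hd).trans (hC.1.lt_of_not_ge hc (hD hd) hcd).le)

/-- The covering pair is `sSup (C ∩ Iic u) ⋖ sInf (C ∩ Ici v)`. -/
theorem exists_gap_of_cut (hC : IsMaxChain (· ≤ ·) C) {u v : α} (hvu : ¬ v ≤ u)
    (hcut : ∀ c ∈ C, c ≤ u ∨ v ≤ c) {x y : α} (hx : x ∈ C) (hxu : x ≤ u) (hy : y ∈ C)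
    (hvy : v ≤ y) :
    ∃ a ∈ C, ∃ b ∈ C, x ≤ a ∧ b ≤ y ∧ a < b ∧ ∀ c ∈ C, ¬ (a < c ∧ c < b) := by
  set L := {c ∈ C | c ≤ u}
  set U := {c ∈ C | v ≤ c}
  have hLu : sSup L ≤ u := sSup_le fun c hc => hc.2
  have hvU : v ≤ sInf U := le_sInf fun c hc => hc.2
  refine ⟨sSup L, hC.sSup_mem fun c hc => hc.1, sInf U, hC.sInf_mem fun c hc => hc.1,
    le_sSup ⟨hx, hxu⟩, sInf_le ⟨hy, hvy⟩, ?_, ?_⟩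
  · exact hC.1.lt_of_not_ge (hC.sInf_mem fun c hc => hc.1) (hC.sSup_mem fun c hc => hc.1)
      fun h => hvu (hvU.trans (h.trans hLu))
  · rintro c hc ⟨hLc, hcU⟩
    rcases hcut c hc with hcu | hvc
    · exact hLc.not_ge (le_sSup ⟨hc, hcu⟩)
    · exact hcU.not_ge (sInf_le ⟨hc, hvc⟩)

end IsMaxChain

namespace CompleteOML

variable {α : Type*} [CompleteOML α] {x y : α}

theorem compl_le_compl (h : x ≤ y) : yᶜ ≤ xᶜ := compl_antitone x y h

theorem compl_inj : xᶜ = yᶜ ↔ x = y :=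
  ⟨fun h => by rw [← compl_compl x, h, compl_compl], congrArg _⟩

theorem le_compl_comm : x ≤ yᶜ ↔ y ≤ xᶜ :=
  ⟨fun h => compl_compl y ▸ compl_le_compl h, fun h => compl_compl x ▸ compl_le_compl h⟩

theorem compl_sup (x y : α) : (x ⊔ y)ᶜ = xᶜ ⊓ yᶜ :=
  le_antisymm (le_inf (compl_le_compl le_sup_left) (compl_le_compl le_sup_right))
    (le_compl_comm.1 (sup_le (le_compl_comm.1 inf_le_left) (le_compl_comm.1 inf_le_right)))

theorem compl_inf (x y : α) : (x ⊓ y)ᶜ = xᶜ ⊔ yᶜ :=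
  compl_inj.1 (by simp only [compl_sup, compl_compl])

theorem eq_bot_of_le_compl (h : x ≤ xᶜ) : x = ⊥ := by
  rw [← inf_eq_left.2 h, inf_compl]

theorem orthomodular_dual (h : x ≤ y) : y ⊓ (yᶜ ⊔ x) = x := by
  rw [← compl_inj]
  simpa only [compl_inf, compl_sup, compl_compl] using orthomodular _ _ (compl_le_compl h)

theorem compl_inf_ne_bot_of_lt (h : x < y) : xᶜ ⊓ y ≠ ⊥ := fun hxy =>
  h.ne (by simpa only [hxy, sup_bot_eq] using orthomodular x y h.le)

end CompleteOML

namespace Commutes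

variable {α : Type*} [CompleteOML α] {a b c : α}

theorem of_le (h : a ≤ b) : Commutes a b := by
  rw [Commutes, inf_eq_left.2 h, sup_eq_left.2 inf_le_left]

theorem of_ge (h : b ≤ a) : Commutes a b := by
  rw [Commutes, inf_eq_right.2 h, inf_comm, CompleteOML.orthomodular b a h]

theorem symm (h : Commutes a b) : Commutes b a := by
  have hsup : a ⊔ bᶜ = a ⊓ b ⊔ bᶜ :=
    le_antisymm (sup_le (h.le.trans (sup_le_sup_left inf_le_right _)) le_sup_right)
      (sup_le_sup_right inf_le_left _)
  have hinf : b ⊓ aᶜ = (a ⊓ b)ᶜ ⊓ b := by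
    rw [← CompleteOML.compl_inj, CompleteOML.compl_inf b, CompleteOML.compl_inf _ b,
      CompleteOML.compl_compl, CompleteOML.compl_compl, sup_comm, hsup]
  rw [Commutes, hinf, inf_comm b a]
  exact (CompleteOML.orthomodular _ _ inf_le_right).symm

theorem compl_right (h : Commutes a b) : Commutes a bᶜ := by
  rw [Commutes, CompleteOML.compl_compl, sup_comm]
  exact h

theorem compl_left (h : Commutes a b) : Commutes aᶜ b :=
  h.symm.compl_right.symm

/-- A special case of the Foulis–Holland theorem. -/
theorem inf_sup_distrib (hab : Commutes a b) (hac : Commutes a c) :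
    a ⊓ (b ⊔ c) = a ⊓ b ⊔ a ⊓ c := by
  set d := a ⊓ b ⊔ a ⊓ c
  have hbd : b ≤ aᶜ ⊔ d := hab.symm.le.trans <| sup_le
    (le_sup_of_le_right (le_sup_of_le_left (inf_comm b a).le)) (le_sup_of_le_left inf_le_right)
  have hcd : c ≤ aᶜ ⊔ d := hac.symm.le.trans <| sup_le
    (le_sup_of_le_right (le_sup_of_le_right (inf_comm c a).le)) (le_sup_of_le_left inf_le_right)
  refine le_antisymm ?_ (sup_le (inf_le_inf_left a le_sup_left) (inf_le_inf_left a le_sup_right))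
  calc a ⊓ (b ⊔ c) ≤ a ⊓ (aᶜ ⊔ d) := inf_le_inf_left a (sup_le hbd hcd)
    _ = d := CompleteOML.orthomodular_dual (sup_le inf_le_left inf_le_left)

theorem sup_left (hba : Commutes b a) (hca : Commutes c a) : Commutes (b ⊔ c) a := by
  have hb : a ⊓ b ⊔ aᶜ ⊓ b = b := by rw [inf_comm a, inf_comm aᶜ, ← hba]
  have hc : a ⊓ c ⊔ aᶜ ⊓ c = c := by rw [inf_comm a, inf_comm aᶜ, ← hca]
  rw [Commutes, inf_comm _ a, inf_comm _ aᶜ, hba.symm.inf_sup_distrib hca.symm,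
    hba.symm.compl_left.inf_sup_distrib hca.symm.compl_left, sup_sup_sup_comm, hb, hc]

theorem inf_left (hba : Commutes b a) (hca : Commutes c a) : Commutes (b ⊓ c) a := by
  simpa only [CompleteOML.compl_sup, CompleteOML.compl_compl] using
    (hba.compl_left.sup_left hca.compl_left).compl_left

end Commutes

section Blocks

variable {α : Type*} [CompleteOML α]

/-- As `Commutes` is symmetric, a chain for it is just a pairwise commuting set. -/
theorem isBlock_of_isMaxChain_commutes {B : Set α} (hB : IsMaxChain Commutes B) : IsBlock B := by
  have hpair : ∀ x ∈ B, ∀ y ∈ B, Commutes x y := fun x hx y hy => by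
    obtain rfl | hne := eq_or_ne x y
    · exact Commutes.of_le le_rfl
    · exact (hB.1 hx hy hne).elim id Commutes.symm
  have hmem : ∀ z, (∀ b ∈ B, Commutes z b) → z ∈ B := fun z hz =>
    hB.mem_of_forall_rel fun b hb _ => Or.inl (hz b hb)
  refine ⟨⟨hmem ⊥ fun b _ => Commutes.of_le bot_le, hmem ⊤ fun b _ => Commutes.of_ge le_top,
    fun x hx y hy => hmem _ fun b hb => (hpair x hx b hb).inf_left (hpair y hy b hb),
    fun x hx y hy => hmem _ fun b hb => (hpair x hx b hb).sup_left (hpair y hy b hb),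
    fun x hx => hmem _ fun b hb => (hpair x hx b hb).compl_left, hpair⟩,
    fun T hT hBT => hB.2 (fun x hx y hy _ => Or.inl (hT.2.2.2.2.2 x hx y hy)) hBT⟩

theorem exists_isBlock_superset {M : Set α} (hM : IsChain Commutes M) :
    ∃ B, IsBlock B ∧ M ⊆ B :=
  let ⟨B, hB, hMB⟩ := hM.exists_maxChain
  ⟨B, isBlock_of_isMaxChain_commutes hB, hMB⟩

theorem IsCommSubalg.le_or_le_compl_of_minimal {S : Set α} (hS : IsCommSubalg S) {a c : α}
    (ha : a ∈ S) (hmin : ∀ s ∈ S, ¬ (⊥ < s ∧ s < a)) (hc : c ∈ S) : a ≤ c ∨ a ≤ cᶜ := by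
  by_cases hac : a ⊓ c = ⊥
  · right
    have h : a = a ⊓ c ⊔ a ⊓ cᶜ := hS.2.2.2.2.2 a ha c hc
    rw [hac, bot_sup_eq] at h
    exact inf_eq_left.1 h.symm
  · left
    have hlt : ¬ a ⊓ c < a := fun hlt =>
      hmin _ (hS.2.2.1 a ha c hc) ⟨bot_lt_iff_ne_bot.2 hac, hlt⟩
    exact inf_eq_left.1 (eq_of_le_of_not_lt inf_le_left hlt)

end Blocks

/-- in a complete OML, if every block is atomic then every maximal chain
is weakly atomic in its induced order. -/
theorem maxChains_weaklyAtomic_of_blocks_atomic {α : Type*} [CompleteOML α]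
    (hb : ∀ S : Set α, IsBlock S → AtomicSubset S) :
    ∀ C : Set α, IsMaxChain (· ≤ ·) C →
      ∀ x ∈ C, ∀ y ∈ C, x < y →
        ∃ a ∈ C, ∃ b ∈ C, x ≤ a ∧ b ≤ y ∧ a < b ∧ ∀ c ∈ C, ¬ (a < c ∧ c < b) := by
  intro C hC x hx y hy hxy
  obtain ⟨B, hB, hCB⟩ := exists_isBlock_superset (hC.1.mono_rel fun _ _ => Commutes.of_le)
  obtain ⟨-, -, hinf, -, hcompl, -⟩ := hB.1
  obtain ⟨a, haB, ha, hmin, hle⟩ := hb B hB (xᶜ ⊓ y) (hinf _ (hcompl x (hCB hx)) y (hCB hy))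
    (CompleteOML.compl_inf_ne_bot_of_lt hxy)
  refine hC.exists_gap_of_cut (u := aᶜ) (v := a) (fun h => ha (CompleteOML.eq_bot_of_le_compl h))
    (fun c hc => ?_) hx (CompleteOML.le_compl_comm.1 (hle.trans inf_le_left)) hy
    (hle.trans inf_le_right)
  exact (hB.1.le_or_le_compl_of_minimal haB hmin (hCB hc)).symm.imp CompleteOML.le_compl_comm.1 id
end

section
/- Let L and M be complete OMLs and let f : L → M be a surjective map preserving arbitrary suprema, arbitrary infima, and orthocomplementation. If L is algebraic, then M is algebraic; and if L is completely hereditarily atomic, then M is completely hereditarily atomic. -/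
/-- A complete lattice is algebraic (compactly generated) if every element is the
supremum of the compact elements below it. -/
def IsAlgebraicLattice (α : Type*) [CompleteLattice α] : Prop :=
  ∀ x : α, x = sSup {c : α | IsCompactElement c ∧ c ≤ x}

/-- A complete subalgebra of a complete OML. -/
def CompleteSubalgebra {α : Type*} [CompleteLattice α] [Compl α] (S : Set α) : Prop :=
  (∀ x ∈ S, xᶜ ∈ S) ∧ (∀ T : Set α, T ⊆ S → sSup T ∈ S) ∧ (∀ T : Set α, T ⊆ S → sInf T ∈ S)

/-!
Let `a` be the largest element of `L` that `f` sends to `⊥`. Orthomodularity makes `f` an order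
isomorphism from the interval `[⊥, aᶜ]` onto `M`: if `x ≤ aᶜ` and `f x ≤ f y`, then
`(x ⊓ y)ᶜ ⊓ x` lies below `a` and below `aᶜ`, so it vanishes and `x = x ⊓ y`. Being algebraic
passes to intervals `[⊥, b]` and along order isomorphisms. For hereditary atomicity, a complete
subalgebra of `M` pulls back to a complete subalgebra of `L`, and atoms of the pullback lying in
`[⊥, aᶜ]` are carried by the isomorphism to atoms of the subalgebra.
-/

open Set

namespace CompleteOML

variable {α : Type*} [CompleteOML α]

theorem compl_bot : (⊥ : α)ᶜ = ⊤ := by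
  simpa using sup_compl (⊥ : α)

theorem compl_inf_self (x : α) : xᶜ ⊓ x = ⊥ := by
  rw [inf_comm, inf_compl]

theorem eq_bot_of_le_of_le_compl {x a : α} (ha : x ≤ a) (hac : x ≤ aᶜ) : x = ⊥ :=
  le_bot_iff.1 <| inf_compl a ▸ le_inf ha hac

theorem eq_of_le_of_compl_inf_eq_bot {x y : α} (hxy : x ≤ y) (h : xᶜ ⊓ y = ⊥) : x = y := by
  simpa [h] using orthomodular x y hxy

end CompleteOML

theorem IsCompactElement.orderIso {α β : Type*} [PartialOrder α] [PartialOrder β] (e : α ≃o β)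
    {k : α} (hk : IsCompactElement k) : IsCompactElement (e k) := by
  intro s u hne hdir hlub hku
  obtain ⟨_, ⟨x, hx, rfl⟩, hkx⟩ := hk (e.symm '' s) (e.symm u) (hne.image _)
    (hdir.mono_comp e.symm.monotone) (e.symm.isLUB_image'.2 hlub)
    (e.le_symm_apply.2 hku)
  exact ⟨x, hx, by simpa using e.monotone hkx⟩

theorem OrderIso.isCompactlyGenerated {α β : Type*} [CompleteLattice α] [CompleteLattice β]
    [IsCompactlyGenerated α] (e : α ≃o β) : IsCompactlyGenerated β where
  exists_sSup_eq y := by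
    obtain ⟨s, hs, hsy⟩ := IsCompactlyGenerated.exists_sSup_eq (e.symm y)
    refine ⟨e '' s, ?_, ?_⟩
    · rintro _ ⟨x, hx, rfl⟩
      exact (hs x hx).orderIso e
    · rw [(e.isLUB_image'.2 (isLUB_sSup s)).sSup_eq, hsy, e.apply_symm_apply]

theorem isAlgebraicLattice_iff {α : Type*} [CompleteLattice α] :
    IsAlgebraicLattice α ↔ IsCompactlyGenerated α :=
  ⟨fun h => ⟨fun x => ⟨_, fun _ hc => hc.1, (h x).symm⟩⟩,
    fun _ x => (sSup_compact_le_eq x).symm⟩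

theorem CompleteSubalgebra.preimage {L M : Type*} [CompleteLattice L] [Compl L]
    [CompleteLattice M] [Compl M] (φ : CompleteLatticeHom L M) (hcompl : ∀ x, φ xᶜ = (φ x)ᶜ)
    {S : Set M} (hS : CompleteSubalgebra S) : CompleteSubalgebra (φ ⁻¹' S) := by
  refine ⟨fun x hx => ?_, fun T hT => ?_, fun T hT => ?_⟩
  · simpa [mem_preimage, hcompl] using hS.1 _ hx
  · rw [mem_preimage, map_sSup]
    exact hS.2.1 _ (image_subset_iff.2 hT)
  · rw [mem_preimage, map_sInf]
    exact hS.2.2 _ (image_subset_iff.2 hT)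

theorem AtomicSubset.of_orderIso_Iic {L M : Type*} [CompleteLattice L] [CompleteLattice M]
    {b : L} (e : Iic b ≃o M) {T : Set L} {S : Set M} (hTS : ∀ x : Iic b, (x : L) ∈ T ↔ e x ∈ S)
    (hT : AtomicSubset T) : AtomicSubset S := by
  intro m hm hm0
  obtain ⟨p, hpT, hp0, hpmin, hpm⟩ :=
    hT (e.symm m) ((hTS _).2 (by simpa using hm)) (by simpa using hm0)
  let p' : Iic b := ⟨p, hpm.trans (e.symm m).2⟩
  refine ⟨e p', (hTS p').1 hpT, ?_, ?_, ?_⟩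
  · exact fun h => hp0 (congrArg Subtype.val (e.injective (h.trans e.map_bot.symm)))
  · rintro s hs ⟨hs0, hsp⟩
    refine hpmin _ ((hTS (e.symm s)).2 (by simpa using hs)) ⟨?_, ?_⟩
    · exact Subtype.coe_lt_coe.2 (by simpa using e.symm.strictMono hs0)
    · exact Subtype.coe_lt_coe.2 (by simpa using e.symm.strictMono hsp)
  · simpa using e.monotone (show p' ≤ e.symm m from hpm)

namespace CompleteLatticeHom

variable {L M : Type*}

def kerSup [CompleteLattice L] [CompleteLattice M] (φ : CompleteLatticeHom L M) : L :=
  sSup {x | φ x = ⊥}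

theorem map_kerSup [CompleteLattice L] [CompleteLattice M] (φ : CompleteLatticeHom L M) :
    φ φ.kerSup = ⊥ := by
  rw [kerSup, map_sSup, sSup_eq_bot]
  rintro _ ⟨x, hx, rfl⟩
  exact hx

variable [CompleteOML L] [CompleteOML M] {φ : CompleteLatticeHom L M}

theorem eq_bot_of_le_compl_kerSup {x : L} (hx : x ≤ φ.kerSupᶜ) (h : φ x = ⊥) : x = ⊥ :=
  CompleteOML.eq_bot_of_le_of_le_compl (le_sSup h) hx

variable (hcompl : ∀ x, φ xᶜ = (φ x)ᶜ)
include hcompl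

theorem le_of_map_le_of_le_compl_kerSup {x y : L} (hx : x ≤ φ.kerSupᶜ) (h : φ x ≤ φ y) :
    x ≤ y := by
  suffices x ⊓ y = x from this ▸ inf_le_right
  refine CompleteOML.eq_of_le_of_compl_inf_eq_bot inf_le_left
    (eq_bot_of_le_compl_kerSup (inf_le_right.trans hx) ?_)
  rw [map_inf, hcompl, map_inf, inf_eq_left.2 h, CompleteOML.compl_inf_self]

theorem map_inf_compl_kerSup (x : L) : φ (x ⊓ φ.kerSupᶜ) = φ x := by
  rw [map_inf, hcompl, map_kerSup, CompleteOML.compl_bot, inf_top_eq]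

noncomputable def orderIsoIicComplKerSup (hsurj : Function.Surjective φ) :
    Iic φ.kerSupᶜ ≃o M :=
  OrderIso.ofSurjective
    (OrderEmbedding.ofMapLEIff (fun x => φ x)
      fun x _ => ⟨le_of_map_le_of_le_compl_kerSup hcompl x.2, fun h => OrderHomClass.mono φ h⟩)
    fun m => by
      obtain ⟨x, rfl⟩ := hsurj m
      exact ⟨⟨x ⊓ φ.kerSupᶜ, inf_le_right⟩, map_inf_compl_kerSup hcompl x⟩

end CompleteLatticeHom

/-- surjective complete homomorphic images of algebraic complete OMLs are
algebraic, and surjective complete homomorphic images of completely hereditarily atomic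
complete OMLs are completely hereditarily atomic. -/
theorem complete_hom_image_algebraic_and_cha {L M : Type*} [CompleteOML L] [CompleteOML M]
    (f : L → M) (hsurj : Function.Surjective f)
    (hsSup : ∀ S : Set L, f (sSup S) = sSup (f '' S))
    (hsInf : ∀ S : Set L, f (sInf S) = sInf (f '' S))
    (hcompl : ∀ x : L, f (xᶜ) = (f x)ᶜ) :
    (IsAlgebraicLattice L → IsAlgebraicLattice M) ∧
    ((∀ S : Set L, CompleteSubalgebra S → AtomicSubset S) →
      ∀ S : Set M, CompleteSubalgebra S → AtomicSubset S) := by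
  let φ : CompleteLatticeHom L M := { toFun := f, map_sInf' := hsInf, map_sSup' := hsSup }
  let e := φ.orderIsoIicComplKerSup hcompl hsurj
  refine ⟨fun hL => ?_, fun hL S hS => ?_⟩
  · rw [isAlgebraicLattice_iff] at hL ⊢
    exact e.isCompactlyGenerated
  · exact (hL _ (hS.preimage φ hcompl)).of_orderIso_Iic e fun _ => Iff.rfl
end

section
/- An OML with the covering property is semimodular: if L is an OML such that for every atom p of L and every x ∈ L the interval [x, x ⊔ p] has height at most one (i.e., either p ≤ x, or x ⋖ x ⊔ p), then for all a, b ∈ L, a ⊓ b ⋖ a implies b ⋖ a ⊔ b. -/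
/-!
If `a ⊓ b ⋖ a`, then by orthomodularity `a` is the join of `c := a ⊓ b` and the relative
complement `p := cᶜ ⊓ a`, and `p` is an atom: the map `x ↦ c ⊔ x` on elements below `p` is
inverted by `y ↦ cᶜ ⊓ y` (the dual orthomodular law), so it embeds `[⊥, p]` into `[c, a]`,
which has no interior point. Since `p ⊓ b ≤ c ⊓ cᶜ = ⊥`, the covering property gives
`b ⋖ b ⊔ p = a ⊔ b`.
-/

/-- An orthomodular lattice. -/
class OML (α : Type*) extends Lattice α, BoundedOrder α, Compl α where
  compl_compl : ∀ x : α, xᶜᶜ = x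
  compl_antitone : ∀ x y : α, x ≤ y → yᶜ ≤ xᶜ
  inf_compl : ∀ x : α, x ⊓ xᶜ = ⊥
  sup_compl : ∀ x : α, x ⊔ xᶜ = ⊤
  orthomodular : ∀ x y : α, x ≤ y → x ⊔ (xᶜ ⊓ y) = y

namespace OML

variable {α : Type*} [OML α]

lemma compl_le_compl {x y : α} (h : x ≤ y) : yᶜ ≤ xᶜ :=
  compl_antitone x y h

lemma le_compl_comm {x y : α} : x ≤ yᶜ ↔ y ≤ xᶜ :=
  ⟨fun h => compl_compl y ▸ compl_le_compl h, fun h => compl_compl x ▸ compl_le_compl h⟩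

lemma compl_sup (x y : α) : (x ⊔ y)ᶜ = xᶜ ⊓ yᶜ := by
  refine le_antisymm (le_inf (compl_le_compl le_sup_left) (compl_le_compl le_sup_right)) ?_
  rw [le_compl_comm]
  exact sup_le (le_compl_comm.mpr inf_le_left) (le_compl_comm.mpr inf_le_right)

lemma compl_inf (x y : α) : (x ⊓ y)ᶜ = xᶜ ⊔ yᶜ := by
  rw [← compl_compl (xᶜ ⊔ yᶜ), compl_sup, compl_compl, compl_compl]

lemma eq_bot_of_le_of_le_compl {x c : α} (h : x ≤ c) (hc : x ≤ cᶜ) : x = ⊥ :=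
  le_bot_iff.mp (inf_compl c ▸ le_inf h hc)

lemma inf_compl_sup_of_le {x y : α} (h : x ≤ y) : y ⊓ (yᶜ ⊔ x) = x := by
  have dual := orthomodular yᶜ xᶜ (compl_le_compl h)
  rw [compl_compl] at dual
  calc y ⊓ (yᶜ ⊔ x) = (yᶜ ⊔ (y ⊓ xᶜ))ᶜ := by rw [compl_sup, compl_inf, compl_compl, compl_compl]
    _ = x := by rw [dual, compl_compl]

lemma compl_inf_sup_of_le_compl {c x : α} (h : x ≤ cᶜ) : cᶜ ⊓ (c ⊔ x) = x := by
  simpa only [compl_compl] using inf_compl_sup_of_le h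

lemma isAtom_compl_inf_of_covBy {c a : α} (hca : c ⋖ a) : IsAtom (cᶜ ⊓ a) := by
  have hsup : c ⊔ (cᶜ ⊓ a) = a := orthomodular c a hca.le
  refine isAtom_iff_le_of_ge.mpr ⟨fun hbot => ?_, fun x hx hxp => ?_⟩
  · exact hca.lt.ne (by rwa [hbot, sup_bot_eq] at hsup)
  have hxc : x ≤ cᶜ := hxp.trans inf_le_left
  have hlt : c < c ⊔ x :=
    left_lt_sup.mpr fun hle => hx (eq_bot_of_le_of_le_compl hle hxc)
  have hxa : c ⊔ x = a :=
    (sup_le hca.le (hxp.trans inf_le_right)).eq_of_not_lt (hca.2 hlt)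
  rw [← hxa, compl_inf_sup_of_le_compl hxc]

end OML

/-- an OML with the covering property (for every atom `p` and every `x`,
either `p ≤ x` or `x ⋖ x ⊔ p`) is semimodular: `a ⊓ b ⋖ a` implies `b ⋖ a ⊔ b`. -/
theorem coveringProperty_OML_semimodular {α : Type*} [OML α]
    (hcov : ∀ p : α, IsAtom p → ∀ x : α, p ≤ x ∨ x ⋖ x ⊔ p) :
    ∀ a b : α, a ⊓ b ⋖ a → b ⋖ a ⊔ b := by
  intro a b hab
  set c := a ⊓ b
  have hatom : IsAtom (cᶜ ⊓ a) := OML.isAtom_compl_inf_of_covBy hab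
  have hnle : ¬ cᶜ ⊓ a ≤ b := fun hle =>
    hatom.1 (OML.eq_bot_of_le_of_le_compl (le_inf inf_le_right hle) inf_le_left)
  have hsup : b ⊔ (cᶜ ⊓ a) = a ⊔ b := by
    calc b ⊔ (cᶜ ⊓ a) = (b ⊔ c) ⊔ (cᶜ ⊓ a) := by rw [sup_of_le_left (inf_le_right : c ≤ b)]
      _ = b ⊔ a := by rw [sup_assoc, OML.orthomodular c a inf_le_left]
      _ = a ⊔ b := sup_comm b a
  exact hsup ▸ (hcov _ hatom b).resolve_left hnle
end
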